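/- arXiv:2406.08776 — 2 statements merged into one kernel-verified Lean document; each statement's English description precedes it below -/
import Mathlib

section
/- Let P ∈ ℝ^{n×n} and W ∈ ℝ^{n×p}. Define M = C(P) ∩ C(W), and let P_{M⊥} denote orthogonal projection onto the orthogonal complement of M. Define R¹ = C(P_{M⊥}P) and R² = C(P_{M⊥}W). Then R¹ ∩ R² = {0}. -/
/-!
If `Q` is the orthogonal projection onto `Mᗮ` with `M = C(P) ∩ C(W)`, then `ker Q = M`. A common
vector `Q u = Q w` of `Q(C(P))` and `Q(C(W))` has `u - w ∈ M ⊆ C(P)`, so `w ∈ C(P) ∩ C(W) = ker Q`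
and the vector is `Q w = 0`.
-/

open Matrix

/-- The column space of a matrix, as a submodule of Euclidean space. -/
noncomputable def colSpaceE {n : ℕ} {q : Type*} [Fintype q] [DecidableEq q]
    (A : Matrix (Fin n) q ℝ) : Submodule ℝ (EuclideanSpace ℝ (Fin n)) :=
  LinearMap.range (Matrix.toEuclideanLin A)

/-- The matrix of the orthogonal projection onto a subspace `K` of Euclidean space. -/
noncomputable def projMat {n : ℕ} (K : Submodule ℝ (EuclideanSpace ℝ (Fin n))) :
    Matrix (Fin n) (Fin n) ℝ :=
  Matrix.toEuclideanLin.symm ((K.subtypeL.comp (K.orthogonalProjection)).toLinearMap)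

theorem Submodule.map_inf_map_eq_bot_of_ker_le {R M N : Type*} [Ring R] [AddCommGroup M]
    [Module R M] [AddCommGroup N] [Module R N] (f : M →ₗ[R] N) {U V : Submodule R M}
    (hker : LinearMap.ker f ≤ U) (hUV : U ⊓ V ≤ LinearMap.ker f) :
    U.map f ⊓ V.map f = ⊥ := by
  rw [eq_bot_iff]
  rintro _ ⟨⟨u, hu, rfl⟩, ⟨v, hv, hfv⟩⟩
  have huv : u - v ∈ LinearMap.ker f := by simp [LinearMap.mem_ker, hfv]
  have hvU : v ∈ U := by simpa using U.sub_mem hu (hker huv)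
  simpa [← hfv] using hUV ⟨hvU, hv⟩

theorem colSpaceE_mul {n m : ℕ} {q : Type*} [Fintype q] [DecidableEq q]
    (A : Matrix (Fin n) (Fin m) ℝ) (B : Matrix (Fin m) q ℝ) :
    colSpaceE (A * B) = (colSpaceE B).map (toEuclideanLin A) := by
  have hmul : toEuclideanLin (A * B) = toEuclideanLin A ∘ₗ toEuclideanLin B := by
    ext x
    simp [toEuclideanLin, mulVec_mulVec]
  rw [colSpaceE, colSpaceE, hmul, LinearMap.range_comp]

theorem toEuclideanLin_projMat {n : ℕ} (K : Submodule ℝ (EuclideanSpace ℝ (Fin n))) :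
    toEuclideanLin (projMat K) = K.starProjection.toLinearMap := by
  simp [projMat, Submodule.starProjection]

theorem ker_toEuclideanLin_projMat_orthogonal {n : ℕ}
    (K : Submodule ℝ (EuclideanSpace ℝ (Fin n))) :
    LinearMap.ker (toEuclideanLin (projMat Kᗮ)) = K := by
  rw [toEuclideanLin_projMat]
  exact (Submodule.ker_starProjection Kᗮ).trans (Submodule.orthogonal_orthogonal K)

/-- With `M = C(P) ∩ C(W)`, `R¹ = C(P_{M⊥} P)` and `R² = C(P_{M⊥} W)`, the individual
subspaces intersect trivially: `R¹ ∩ R² = {0}`. -/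
theorem individual_subspaces_trivial_inter {n p : ℕ}
    (P : Matrix (Fin n) (Fin n) ℝ) (W : Matrix (Fin n) (Fin p) ℝ) :
    (colSpaceE (projMat (colSpaceE P ⊓ colSpaceE W)ᗮ * P)) ⊓
      (colSpaceE (projMat (colSpaceE P ⊓ colSpaceE W)ᗮ * W)) = ⊥ := by
  have hker := ker_toEuclideanLin_projMat_orthogonal (colSpaceE P ⊓ colSpaceE W)
  rw [colSpaceE_mul, colSpaceE_mul]
  exact Submodule.map_inf_map_eq_bot_of_ker_le _ (hker.le.trans inf_le_left) hker.ge
end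

section
/- Let V⁽¹⁾ = (M R⁽¹⁾) and V⁽²⁾ = (M R⁽²⁾) where M ∈ O_{n,r_M}, R⁽ᵏ⁾ ∈ O_{n,r_k}, MᵀR⁽ᵏ⁾ = 0 for k=1,2, and C(R⁽¹⁾) ∩ C(R⁽²⁾) = {0} with r_M, r₁, r₂ ≥ 1. Then the span of the eigenvectors of Q = V⁽¹⁾(V⁽¹⁾)ᵀ + V⁽²⁾(V⁽²⁾)ᵀ corresponding to its r_M largest eigenvalues equals C(M); i.e., every eigenvalue of Q on C(M) equals 2 and every other eigenvalue is strictly less than 2. -/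
open Matrix

/-- The column space of a matrix. -/
def colSpace {m q : Type*} [Fintype q] (A : Matrix m q ℝ) : Submodule ℝ (m → ℝ) :=
  LinearMap.range A.mulVecLin

/-!
Each `V⁽ᵏ⁾` has orthonormal columns, so `Pₖ = V⁽ᵏ⁾(V⁽ᵏ⁾)ᵀ` is an orthogonal projection and
`xᵀPₖx = ‖x‖² - ‖x - Pₖx‖² ≤ ‖x‖²`. Hence `xᵀQx ≤ 2‖x‖²`, and an eigenvector of `Q = P₁ + P₂` with
eigenvalue `μ ≥ 2` is fixed by both projections. Since `Pₖ = MMᵀ + R⁽ᵏ⁾(R⁽ᵏ⁾)ᵀ`, the residual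
`x - MMᵀx` then lies in `C(R⁽¹⁾) ∩ C(R⁽²⁾) = {0}`, so `x ∈ C(M)`. On `C(M)` both projections
act as the identity, giving the eigenvalue `2`.
-/

namespace Matrix

variable {R m p q : Type*}

lemma fromCols_mul_transpose_fromCols [CommSemiring R] [Fintype p] [Fintype q]
    (A : Matrix m p R) (B : Matrix m q R) :
    fromCols A B * (fromCols A B)ᵀ = A * Aᵀ + B * Bᵀ := by
  rw [transpose_fromCols, fromCols_mul_fromRows]

lemma transpose_fromCols_mul_fromCols_eq_one [CommSemiring R] [Fintype m] [DecidableEq p]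
    [DecidableEq q] {A : Matrix m p R} {B : Matrix m q R}
    (hA : Aᵀ * A = 1) (hB : Bᵀ * B = 1) (hAB : Aᵀ * B = 0) :
    (fromCols A B)ᵀ * fromCols A B = 1 := by
  have hBA : Bᵀ * A = 0 := by simpa using congrArg transpose hAB
  rw [transpose_fromCols, fromRows_mul_fromCols, hA, hB, hAB, hBA, fromBlocks_one]

lemma fromCols_mul_transpose_fromCols_mul_left [CommSemiring R] [Fintype m] [Fintype p]
    [Fintype q] [DecidableEq p] {A : Matrix m p R} {B : Matrix m q R}
    (hA : Aᵀ * A = 1) (hAB : Aᵀ * B = 0) :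
    fromCols A B * (fromCols A B)ᵀ * A = A := by
  have hBA : Bᵀ * A = 0 := by simpa using congrArg transpose hAB
  rw [fromCols_mul_transpose_fromCols, Matrix.add_mul, Matrix.mul_assoc, Matrix.mul_assoc, hA,
    hBA, Matrix.mul_one, Matrix.mul_zero, add_zero]

lemma dotProduct_mul_transpose_mulVec_add [CommRing R] [Fintype m] [Fintype q] [DecidableEq q]
    {V : Matrix m q R} (hV : Vᵀ * V = 1) (x : m → R) :
    x ⬝ᵥ ((V * Vᵀ) *ᵥ x) + (x - (V * Vᵀ) *ᵥ x) ⬝ᵥ (x - (V * Vᵀ) *ᵥ x) = x ⬝ᵥ x := by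
  have hxP : x ⬝ᵥ ((V * Vᵀ) *ᵥ x) = (Vᵀ *ᵥ x) ⬝ᵥ (Vᵀ *ᵥ x) := by
    rw [← mulVec_mulVec, dotProduct_mulVec, ← mulVec_transpose]
  have hPP : ((V * Vᵀ) *ᵥ x) ⬝ᵥ ((V * Vᵀ) *ᵥ x) = (Vᵀ *ᵥ x) ⬝ᵥ (Vᵀ *ᵥ x) := by
    rw [← mulVec_mulVec, dotProduct_mulVec, ← mulVec_transpose, mulVec_mulVec, hV, one_mulVec]
  rw [sub_dotProduct, dotProduct_sub, dotProduct_sub, dotProduct_comm ((V * Vᵀ) *ᵥ x) x, hxP,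
    hPP]
  ring

lemma mul_transpose_mulVec_eq_self_of_two_le [CommRing R] [LinearOrder R] [IsStrictOrderedRing R]
    [Fintype m] [Fintype p] [Fintype q] [DecidableEq p] [DecidableEq q]
    {V₁ : Matrix m p R} {V₂ : Matrix m q R}
    (hV₁ : V₁ᵀ * V₁ = 1) (hV₂ : V₂ᵀ * V₂ = 1) {μ : R} {x : m → R}
    (hx : (V₁ * V₁ᵀ + V₂ * V₂ᵀ) *ᵥ x = μ • x) (hμ : 2 ≤ μ) :
    (V₁ * V₁ᵀ) *ᵥ x = x ∧ (V₂ * V₂ᵀ) *ᵥ x = x := by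
  have nonneg (v : m → R) : 0 ≤ v ⬝ᵥ v := Finset.sum_nonneg fun i _ => mul_self_nonneg _
  have h₁ := dotProduct_mul_transpose_mulVec_add hV₁ x
  have h₂ := dotProduct_mul_transpose_mulVec_add hV₂ x
  have hQ : x ⬝ᵥ ((V₁ * V₁ᵀ) *ᵥ x) + x ⬝ᵥ ((V₂ * V₂ᵀ) *ᵥ x) = μ * (x ⬝ᵥ x) := by
    rw [← dotProduct_add, ← add_mulVec, hx, dotProduct_smul, smul_eq_mul]
  have hμx : 2 * (x ⬝ᵥ x) ≤ μ * (x ⬝ᵥ x) := mul_le_mul_of_nonneg_right hμ (nonneg x)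
  have hn₁ := nonneg (x - (V₁ * V₁ᵀ) *ᵥ x)
  have hn₂ := nonneg (x - (V₂ * V₂ᵀ) *ᵥ x)
  constructor
  · exact (sub_eq_zero.mp (dotProduct_self_eq_zero.mp (by linarith))).symm
  · exact (sub_eq_zero.mp (dotProduct_self_eq_zero.mp (by linarith))).symm

end Matrix

theorem leading_eigenspace_eq_joint_general {n rM r₁ r₂ : ℕ}
    (M : Matrix (Fin n) (Fin rM) ℝ)
    (R₁ : Matrix (Fin n) (Fin r₁) ℝ) (R₂ : Matrix (Fin n) (Fin r₂) ℝ)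
    (hM : Mᵀ * M = 1) (hR₁ : R₁ᵀ * R₁ = 1) (hR₂ : R₂ᵀ * R₂ = 1)
    (hMR₁ : Mᵀ * R₁ = 0) (hMR₂ : Mᵀ * R₂ = 0)
    (hInter : colSpace R₁ ⊓ colSpace R₂ = ⊥)
    (Q : Matrix (Fin n) (Fin n) ℝ)
    (hQ : Q = Matrix.fromCols M R₁ * (Matrix.fromCols M R₁)ᵀ +
        Matrix.fromCols M R₂ * (Matrix.fromCols M R₂)ᵀ) :
    (∀ x ∈ colSpace M, Q *ᵥ x = (2 : ℝ) • x) ∧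
    (∀ (μ : ℝ) (x : Fin n → ℝ), x ≠ 0 → Q *ᵥ x = μ • x → x ∉ colSpace M → μ < 2) := by
  subst hQ
  refine ⟨?_, fun μ x _ hx hxM => ?_⟩
  · rintro _ ⟨v, rfl⟩
    have hQM : (fromCols M R₁ * (fromCols M R₁)ᵀ + fromCols M R₂ * (fromCols M R₂)ᵀ) * M =
        (2 : ℝ) • M := by
      rw [Matrix.add_mul, fromCols_mul_transpose_fromCols_mul_left hM hMR₁,
        fromCols_mul_transpose_fromCols_mul_left hM hMR₂, two_smul]
    rw [mulVecLin_apply, mulVec_mulVec, hQM, smul_mulVec]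
  by_contra! hμ
  obtain ⟨hx₁, hx₂⟩ := mul_transpose_mulVec_eq_self_of_two_le
    (transpose_fromCols_mul_fromCols_eq_one hM hR₁ hMR₁)
    (transpose_fromCols_mul_fromCols_eq_one hM hR₂ hMR₂) hx hμ
  rw [fromCols_mul_transpose_fromCols, add_mulVec, ← mulVec_mulVec, ← mulVec_mulVec,
    ← eq_sub_iff_add_eq'] at hx₁ hx₂
  have hres : x - M *ᵥ (Mᵀ *ᵥ x) ∈ colSpace R₁ ⊓ colSpace R₂ :=
    ⟨⟨R₁ᵀ *ᵥ x, hx₁⟩, ⟨R₂ᵀ *ᵥ x, hx₂⟩⟩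
  rw [hInter, Submodule.mem_bot, sub_eq_zero] at hres
  exact hxM ⟨Mᵀ *ᵥ x, hres.symm⟩

/-- With `V⁽¹⁾ = (M R⁽¹⁾)`, `V⁽²⁾ = (M R⁽²⁾)`, orthonormal columns, `MᵀR⁽ᵏ⁾ = 0`,
`C(R⁽¹⁾) ∩ C(R⁽²⁾) = {0}` and `r_M, r₁, r₂ ≥ 1`, the top-`r_M` eigenspace of
`Q = V⁽¹⁾(V⁽¹⁾)ᵀ + V⁽²⁾(V⁽²⁾)ᵀ` is `C(M)`: every vector of `C(M)` is an eigenvector of `Q`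
with eigenvalue `2`, and every eigenvalue with an eigenvector outside `C(M)` is `< 2`. -/
theorem leading_eigenspace_eq_joint {n rM r₁ r₂ : ℕ}
    (hrM : 1 ≤ rM) (hr₁ : 1 ≤ r₁) (hr₂ : 1 ≤ r₂)
    (M : Matrix (Fin n) (Fin rM) ℝ)
    (R₁ : Matrix (Fin n) (Fin r₁) ℝ) (R₂ : Matrix (Fin n) (Fin r₂) ℝ)
    (hM : Mᵀ * M = 1) (hR₁ : R₁ᵀ * R₁ = 1) (hR₂ : R₂ᵀ * R₂ = 1)
    (hMR₁ : Mᵀ * R₁ = 0) (hMR₂ : Mᵀ * R₂ = 0)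
    (hInter : colSpace R₁ ⊓ colSpace R₂ = ⊥)
    (Q : Matrix (Fin n) (Fin n) ℝ)
    (hQ : Q = Matrix.fromCols M R₁ * (Matrix.fromCols M R₁)ᵀ +
        Matrix.fromCols M R₂ * (Matrix.fromCols M R₂)ᵀ) :
    (∀ x ∈ colSpace M, Q *ᵥ x = (2 : ℝ) • x) ∧
    (∀ (μ : ℝ) (x : Fin n → ℝ), x ≠ 0 → Q *ᵥ x = μ • x → x ∉ colSpace M → μ < 2) :=
  leading_eigenspace_eq_joint_general M R₁ R₂ hM hR₁ hR₂ hMR₁ hMR₂ hInter Q hQ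
end
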